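/- Let n = 2k and s with gcd(s, 2k) = 1. In characteristic 2, for any b ∈ F_{2^{2k}} \ {0, 1}, the polynomial b(x + u)^{2^s+1} + (x + v)^{2^s+1}, where u = (b^{2^{-s}} + 1)/(b + b^{2^{-s}}) and v = (b^{2^{-s}+1} + b)/(b + b^{2^{-s}}), equals (b+1)·(x^{2^s+1} + x + A(b)) with A(b) = b(b+1)^{2^s+2^{-s}}/(b + b^{2^{-s}})^{2^s+1}. -/

import Mathlib

/-!
Since `v = b * u`, expanding `(x + c)^(2^s+1) = x^(2^s+1) + c x^(2^s) + c^(2^s) x + c^(2^s+1)`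
makes the `x^(2^s)` terms of `b (x + u)^(2^s+1)` and `(x + v)^(2^s+1)` cancel in characteristic 2.
The remaining coefficients are computed with `b'^(2^s) = b`, which turns `u^(2^s)` into
`(b + 1) / (b + b^(2^s))`. The only non-formal input is `b + b' ≠ 0`: otherwise `b` would be fixed
by both `x ↦ x^(2^s)` and `x ↦ x^(2^(2k))`, hence by `x ↦ x^2` as `gcd(s, 2k) = 1`, so `b ∈ {0, 1}`.
-/

open Polynomial

theorem pow_pow_gcd_eq_self {M : Type*} [Monoid M] {x : M} {p m n : ℕ}
    (hm : x ^ p ^ m = x) (hn : x ^ p ^ n = x) : x ^ p ^ m.gcd n = x := by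
  have periodic (k : ℕ) (hk : x ^ p ^ k = x) : Function.IsPeriodicPt (· ^ p) k x := by
    rwa [Function.IsPeriodicPt, Function.IsFixedPt, pow_iterate]
  have := (periodic m hm).gcd (periodic n hn)
  rwa [Function.IsPeriodicPt, Function.IsFixedPt, pow_iterate] at this

theorem FiniteField.pow_char_eq_self_of_pow_char_pow_eq_self {F : Type*} [Field F] [Fintype F]
    {p n s : ℕ} (hcard : Fintype.card F = p ^ n) (hsn : s.gcd n = 1) {x : F}
    (hx : x ^ p ^ s = x) : x ^ p = x := by
  have hxn : x ^ p ^ n = x := hcard ▸ FiniteField.pow_card x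
  simpa [hsn] using pow_pow_gcd_eq_self hx hxn

theorem Polynomial.X_add_C_pow_expChar_pow_add_one {R : Type*} [CommSemiring R] {p : ℕ}
    [ExpChar R p] (s : ℕ) (c : R) :
    (X + C c) ^ (p ^ s + 1)
      = X ^ (p ^ s + 1) + C c * X ^ p ^ s + C (c ^ p ^ s) * X + C (c ^ (p ^ s + 1)) := by
  rw [pow_succ, add_pow_expChar_pow, C_pow, C_pow]
  ring

theorem Polynomial.C_mul_X_add_C_pow_add_X_add_C_mul_pow {R : Type*} [CommRing R] [CharP R 2]
    (s : ℕ) (b u : R) :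
    C b * (X + C u) ^ (2 ^ s + 1) + (X + C (b * u)) ^ (2 ^ s + 1)
      = C (b + 1) * X ^ (2 ^ s + 1) + C ((b + b ^ 2 ^ s) * u ^ 2 ^ s) * X
        + C (b * (1 + b ^ 2 ^ s) * u ^ (2 ^ s + 1)) := by
  have two : (2 : R[X]) = 0 := CharTwo.two_eq_zero
  rw [X_add_C_pow_expChar_pow_add_one, X_add_C_pow_expChar_pow_add_one]
  simp only [map_add, map_mul, map_pow, map_one]
  linear_combination (C b * C u * X ^ 2 ^ s) * two

theorem stmt17_general (F : Type*) [Field F] [Fintype F] (k s : ℕ)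
    (hcard : Fintype.card F = 2 ^ (2 * k)) (hgcd : Nat.gcd s (2 * k) = 1)
    (b : F) (hb0 : b ≠ 0) (hb1 : b ≠ 1)
    (b' : F) (hb' : b' ^ 2 ^ s = b)
    (u v : F) (hu : u = (b' + 1) / (b + b')) (hv : v = (b' * b + b) / (b + b')) :
    C b * (X + C u) ^ (2 ^ s + 1) + (X + C v) ^ (2 ^ s + 1)
      = C (b + 1) *
          (X ^ (2 ^ s + 1) + X
            + C (b * ((b + 1) ^ 2 ^ s * (b' + 1)) / (b + b') ^ (2 ^ s + 1)) : F[X]) := by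
  have := charP_of_card_eq_prime_pow hcard
  have hbb' : b + b' ≠ 0 := by
    rw [Ne, CharTwo.add_eq_zero]
    rintro rfl
    have hb2 : b * b = b := by
      rw [← sq, FiniteField.pow_char_eq_self_of_pow_char_pow_eq_self hcard hgcd hb']
    rcases IsIdempotentElem.iff_eq_zero_or_one.mp hb2 with h | h <;> contradiction
  have hfrob : (b + b') ^ 2 ^ s = b + b ^ 2 ^ s := by rw [add_pow_char_pow, hb', add_comm]
  have hbb : b + b ^ 2 ^ s ≠ 0 := hfrob ▸ pow_ne_zero _ hbb'
  have hu_frob : u ^ 2 ^ s = (b + 1) / (b + b ^ 2 ^ s) := by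
    rw [hu, div_pow, add_pow_char_pow, hb', one_pow, hfrob]
  have hvu : v = b * u := by rw [hu, hv]; field_simp
  have hX : (b + b ^ 2 ^ s) * u ^ 2 ^ s = b + 1 := by rw [hu_frob]; field_simp
  have hconst : b * (1 + b ^ 2 ^ s) * u ^ (2 ^ s + 1)
      = (b + 1) * (b * ((b + 1) ^ 2 ^ s * (b' + 1)) / (b + b') ^ (2 ^ s + 1)) := by
    rw [pow_succ, hu_frob, hu, pow_succ (b + b'), hfrob, add_pow_char_pow, one_pow]
    field_simp
    ring
  rw [hvu, C_mul_X_add_C_pow_add_X_add_C_mul_pow, hX, hconst, C_mul]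
  ring

/-- For `b ∈ F_{2^{2k}} \ {0,1}`, with `b'` the inverse Frobenius
image of `b` (so `b'^{2^s} = b`), `u = (b'+1)/(b+b')`, `v = (b'·b+b)/(b+b')`
(note `b^{2^{-s}+1} = b'·b`), the polynomial
`b(x+u)^{2^s+1} + (x+v)^{2^s+1}` equals `(b+1)(x^{2^s+1} + x + A(b))` where
`A(b) = b(b+1)^{2^s+2^{-s}}/(b+b')^{2^s+1} = b((b+1)^{2^s}(b'+1))/(b+b')^{2^s+1}`. -/
theorem stmt17 (F : Type*) [Field F] [Fintype F] (k s : ℕ) (hk : 0 < k) (hs : 0 < s)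
    (hcard : Fintype.card F = 2 ^ (2 * k)) (hgcd : Nat.gcd s (2 * k) = 1)
    (b : F) (hb0 : b ≠ 0) (hb1 : b ≠ 1)
    (b' : F) (hb' : b' ^ 2 ^ s = b)
    (u v : F) (hu : u = (b' + 1) / (b + b')) (hv : v = (b' * b + b) / (b + b')) :
    C b * (X + C u) ^ (2 ^ s + 1) + (X + C v) ^ (2 ^ s + 1)
      = C (b + 1) *
          (X ^ (2 ^ s + 1) + X
            + C (b * ((b + 1) ^ 2 ^ s * (b' + 1)) / (b + b') ^ (2 ^ s + 1)) : F[X]) :=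
  stmt17_general F k s hcard hgcd b hb0 hb1 b' hb' u v hu hv
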